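/- arXiv:2403.07830 — 7 statements merged into one kernel-verified Lean document; each statement's English description precedes it below -/
import Mathlib

section
/- Let (Ω, 𝓕, P) be a probability space and let B be a measurable set. Suppose that for every ε > 0 there exist measurable sets C and D such that C and D are independent events (P(C ∩ D) = P(C)·P(D)), P(B Δ C) ≤ ε and P(B Δ D) ≤ ε, where Δ denotes symmetric difference. Then P(B) = 0 or P(B) = 1. -/
/-! Approximating `B` by `C` and by `D` approximates `B = B ∩ B` by `C ∩ D`, so `P B` is
close both to `P (C ∩ D) = P C * P D` and to `P B * P B`. Letting the error go to zero,
`P B` is an idempotent real number. -/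

open MeasureTheory ENNReal
open scoped symmDiff

theorem Set.symmDiff_inter_subset_union {α : Type*} (s t u : Set α) :
    s ∆ (t ∩ u) ⊆ s ∆ t ∪ s ∆ u := by
  intro x
  simp only [Set.mem_symmDiff, Set.mem_union, Set.mem_inter_iff]
  tauto

theorem abs_sub_mul_self_le_of_approx {b c d x y z : ℝ} (hb₀ : 0 ≤ b) (hb₁ : b ≤ 1)
    (hd₀ : 0 ≤ d) (hd₁ : d ≤ 1) (hcd : |b - c * d| ≤ x) (hc : |b - c| ≤ y)
    (hd : |b - d| ≤ z) : |b - b * b| ≤ x + y + z := by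
  have hcb : |(c - b) * d| ≤ y := by
    rw [abs_mul, abs_sub_comm, abs_of_nonneg hd₀]
    exact (mul_le_of_le_one_right (abs_nonneg _) hd₁).trans hc
  have hbd : |b * (d - b)| ≤ z := by
    rw [abs_mul, abs_sub_comm, abs_of_nonneg hb₀]
    exact mul_le_of_le_one_left (abs_nonneg _) hb₁ |>.trans hd
  calc |b - b * b| = |(b - c * d) + (c - b) * d + b * (d - b)| := by ring_nf
    _ ≤ |b - c * d| + |(c - b) * d| + |b * (d - b)| := abs_add_three _ _ _
    _ ≤ x + y + z := by gcongr

namespace MeasureTheory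

variable {Ω : Type*} [MeasurableSpace Ω] {B C D : Set Ω}

theorem abs_measureReal_sub_inter_le (μ : Measure Ω) [IsFiniteMeasure μ]
    (hB : MeasurableSet B) (hC : MeasurableSet C) (hD : MeasurableSet D) :
    |μ.real B - μ.real (C ∩ D)| ≤ μ.real (B ∆ C) + μ.real (B ∆ D) :=
  (abs_measureReal_sub_le_measureReal_symmDiff hB.nullMeasurableSet
    (hC.inter hD).nullMeasurableSet).trans <|
      (measureReal_mono (Set.symmDiff_inter_subset_union B C D)).trans (measureReal_union_le _ _)

theorem abs_measureReal_sub_mul_self_le_of_inter_eq_mul (P : Measure Ω) [IsProbabilityMeasure P]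
    (hB : MeasurableSet B) (hC : MeasurableSet C) (hD : MeasurableSet D)
    (hCD : P (C ∩ D) = P C * P D) :
    |P.real B - P.real B * P.real B| ≤ 2 * (P.real (B ∆ C) + P.real (B ∆ D)) := by
  have hcd : |P.real B - P.real C * P.real D| ≤ P.real (B ∆ C) + P.real (B ∆ D) := by
    have hreal : P.real (C ∩ D) = P.real C * P.real D := by
      simp only [Measure.real, hCD, ENNReal.toReal_mul]
    exact hreal ▸ abs_measureReal_sub_inter_le P hB hC hD
  have h := abs_sub_mul_self_le_of_approx measureReal_nonneg measureReal_le_one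
    measureReal_nonneg measureReal_le_one hcd
    (abs_measureReal_sub_le_measureReal_symmDiff hB.nullMeasurableSet hC.nullMeasurableSet)
    (abs_measureReal_sub_le_measureReal_symmDiff hB.nullMeasurableSet hD.nullMeasurableSet)
  linarith

end MeasureTheory

/-- If an event `B` can be approximated arbitrarily well (in symmetric difference)
by pairs of independent events, then `B` has probability `0` or `1`. -/
theorem stmt_0 {Ω : Type*} [MeasurableSpace Ω] (P : Measure Ω) [IsProbabilityMeasure P]
    (B : Set Ω) (hB : MeasurableSet B)
    (h : ∀ ε : ℝ≥0∞, 0 < ε → ∃ C D : Set Ω, MeasurableSet C ∧ MeasurableSet D ∧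
      P (C ∩ D) = P C * P D ∧ P (symmDiff B C) ≤ ε ∧ P (symmDiff B D) ≤ ε) :
    P B = 0 ∨ P B = 1 := by
  have hidem : P.real B * P.real B = P.real B := by
    refine eq_of_forall_dist_le fun ε hε => ?_
    obtain ⟨C, D, hC, hD, hCD, hBC, hBD⟩ := h (ENNReal.ofReal (ε / 4)) (by positivity)
    have hBC' : P.real (B ∆ C) ≤ ε / 4 := ENNReal.toReal_le_of_le_ofReal (by positivity) hBC
    have hBD' : P.real (B ∆ D) ≤ ε / 4 := ENNReal.toReal_le_of_le_ofReal (by positivity) hBD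
    rw [Real.dist_eq, abs_sub_comm]
    linarith [abs_measureReal_sub_mul_self_le_of_inter_eq_mul P hB hC hD hCD]
  rcases IsIdempotentElem.iff_eq_zero_or_one.mp hidem with h0 | h1
  · exact .inl ((measureReal_eq_zero_iff).mp h0)
  · exact .inr ((ENNReal.toReal_eq_one_iff _).mp h1)
end

section
/- Let (Ω, 𝓕, P) be a probability space and T : Ω → Ω a measurable, measure-preserving map. Suppose that for every measurable set B and every ε > 0 there exist N ∈ ℕ and a measurable set C with P(B Δ C) ≤ ε such that C and (T^[N])⁻¹(C) are independent events. Then T is ergodic: every measurable set B with T⁻¹(B) = B satisfies P(B) = 0 or P(B) = 1. -/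
open MeasureTheory ENNReal
open scoped symmDiff

/-!
Let `B` be invariant and `C` an event close to `B` that is independent of `D = T^[N] ⁻¹' C`.
Since `B = T^[N] ⁻¹' B` and `T^[N]` preserves `P`, the event `D` is as close to `B` as `C` is.
Hence `P B = P (B ∩ B) ≈ P (C ∩ D) = P C * P D ≈ P B * P B`, with an error that can be made
arbitrarily small, so `P B = P B ^ 2`.
-/

lemma Set.inter_symmDiff_inter_subset {α : Type*} (s t u v : Set α) :
    (s ∩ t) ∆ (u ∩ v) ⊆ s ∆ u ∪ t ∆ v := by
  grind

namespace MeasureTheory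

variable {Ω : Type*} [MeasurableSpace Ω] {μ : Measure Ω} {s t u v : Set Ω}

lemma abs_measureReal_inter_sub_le [IsFiniteMeasure μ] (hs : NullMeasurableSet s μ)
    (ht : NullMeasurableSet t μ) (hu : NullMeasurableSet u μ) (hv : NullMeasurableSet v μ) :
    |μ.real (s ∩ t) - μ.real (u ∩ v)| ≤ μ.real (s ∆ u) + μ.real (t ∆ v) :=
  (abs_measureReal_sub_le_measureReal_symmDiff (hs.inter ht) (hu.inter hv)).trans <|
    (measureReal_mono (Set.inter_symmDiff_inter_subset s t u v)).trans
      (measureReal_union_le _ _)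

lemma abs_measureReal_mul_sub_le [IsProbabilityMeasure μ] (hs : NullMeasurableSet s μ)
    (ht : NullMeasurableSet t μ) (hu : NullMeasurableSet u μ) (hv : NullMeasurableSet v μ) :
    |μ.real s * μ.real t - μ.real u * μ.real v| ≤ μ.real (s ∆ u) + μ.real (t ∆ v) := by
  have abs_le_one (w : Set Ω) : |μ.real w| ≤ 1 :=
    (abs_of_nonneg measureReal_nonneg).trans_le measureReal_le_one
  calc |μ.real s * μ.real t - μ.real u * μ.real v|
      = |(μ.real s - μ.real u) * μ.real t + μ.real u * (μ.real t - μ.real v)| := by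
        congr 1; ring
    _ ≤ |μ.real s - μ.real u| * |μ.real t| + |μ.real u| * |μ.real t - μ.real v| := by
        grw [abs_add_le, abs_mul, abs_mul]
    _ ≤ μ.real (s ∆ u) * 1 + 1 * μ.real (t ∆ v) := by
        gcongr
        exacts [abs_measureReal_sub_le_measureReal_symmDiff hs hu, abs_le_one t, abs_le_one u,
          abs_measureReal_sub_le_measureReal_symmDiff ht hv]
    _ = μ.real (s ∆ u) + μ.real (t ∆ v) := by ring

lemma measure_eq_zero_or_one_of_forall_approx_indep [IsProbabilityMeasure μ]
    (hs : NullMeasurableSet s μ)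
    (h : ∀ ε : ℝ≥0∞, 0 < ε → ∃ t u : Set Ω, NullMeasurableSet t μ ∧
      NullMeasurableSet u μ ∧ μ (s ∆ t) ≤ ε ∧ μ (s ∆ u) ≤ ε ∧ μ (t ∩ u) = μ t * μ u) :
    μ s = 0 ∨ μ s = 1 := by
  have hsq : μ.real s * μ.real s = μ.real s := by
    refine eq_of_forall_dist_le fun ε hε ↦ ?_
    obtain ⟨t, u, ht, hu, hst, hsu, htu⟩ := h (.ofReal (ε / 4)) (by positivity)
    have hst' : μ.real (s ∆ t) ≤ ε / 4 := toReal_le_of_le_ofReal (by positivity) hst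
    have hsu' : μ.real (s ∆ u) ≤ ε / 4 := toReal_le_of_le_ofReal (by positivity) hsu
    have htu' : μ.real (t ∩ u) = μ.real t * μ.real u := by
      simp only [measureReal_def, htu, toReal_mul]
    have hinter := abs_measureReal_inter_sub_le hs hs ht hu
    rw [Set.inter_self, htu'] at hinter
    calc dist (μ.real s * μ.real s) (μ.real s)
        ≤ |μ.real s * μ.real s - μ.real t * μ.real u|
          + |μ.real s - μ.real t * μ.real u| := by
          rw [Real.dist_eq, abs_sub_comm (μ.real s)]; exact abs_sub_le _ _ _
      _ ≤ (ε / 4 + ε / 4) + (ε / 4 + ε / 4) := by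
          gcongr
          exacts [(abs_measureReal_mul_sub_le hs hs ht hu).trans (add_le_add hst' hsu'),
            hinter.trans (add_le_add hst' hsu')]
      _ = ε := by ring
  rcases mul_left_eq_self₀.mp hsq with h1 | h0
  · exact .inr ((toReal_eq_one_iff _).mp h1)
  · exact .inl ((measureReal_eq_zero_iff).mp h0)

end MeasureTheory

/-- Ergodicity criterion: if every event can be approximated (in symmetric difference) by
events that become independent of their iterated preimages, then the measure-preserving
map `T` is ergodic. -/
theorem stmt_1 {Ω : Type*} [MeasurableSpace Ω] (P : Measure Ω) [IsProbabilityMeasure P]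
    (T : Ω → Ω) (hT : MeasurePreserving T P P)
    (h : ∀ B : Set Ω, MeasurableSet B → ∀ ε : ℝ≥0∞, 0 < ε →
      ∃ (N : ℕ) (C : Set Ω), MeasurableSet C ∧ P (symmDiff B C) ≤ ε ∧
        P (C ∩ (T^[N]) ⁻¹' C) = P C * P ((T^[N]) ⁻¹' C)) :
    ∀ B : Set Ω, MeasurableSet B → T ⁻¹' B = B → P B = 0 ∨ P B = 1 := by
  intro B hB hTB
  refine measure_eq_zero_or_one_of_forall_approx_indep hB.nullMeasurableSet fun ε hε ↦ ?_
  obtain ⟨N, C, hC, hBC, hind⟩ := h B hB ε hε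
  have hBD : P (B ∆ ((T^[N]) ⁻¹' C)) = P (B ∆ C) := by
    conv_lhs => rw [← Function.IsFixedPt.preimage_iterate hTB N]
    rw [← Set.preimage_symmDiff,
      (hT.iterate N).measure_preimage (hB.symmDiff hC).nullMeasurableSet]
  exact ⟨C, _, hC.nullMeasurableSet, ((hT.iterate N).measurable hC).nullMeasurableSet, hBC,
    hBD ▸ hBC, hind⟩
end

section
/- Let k ∈ ℕ and let x be a pair family of real numbers (indexed by pairs (i,j) with i < j in Fin k). Then the family of terms Π_{i<j} x_{(i,j)}^{n_{(i,j)}} / (n_{(i,j)})!, indexed by even pair families n of natural numbers, is summable, and Σ_{a ∈ {-1,1}^k} exp( Σ_{i<j} a_i a_j x_{(i,j)} ) = 2^k · Σ'_{n even} Π_{i<j} x_{(i,j)}^{n_{(i,j)}} / (n_{(i,j)})!, where the sum on the right is the tsum over the set of even pair families. -/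
open Finset

/-- The set of pairs `(i,j)` with `i < j` in `Fin k`. -/
abbrev PairIdx (k : ℕ) := {p : Fin k × Fin k // p.1 < p.2}

/-- The degree of `i` in a pair family `n`: the sum of `n` over pairs having `i` as an
endpoint, i.e. `∑_{j > i} n (i,j) + ∑_{j < i} n (j,i)`. -/
def deg {k : ℕ} (n : PairIdx k → ℕ) (i : Fin k) : ℕ :=
  ∑ p : PairIdx k, if p.val.1 = i ∨ p.val.2 = i then n p else 0

/-- A pair family of natural numbers is even if all its degrees are even. -/
def EvenFamily {k : ℕ} (n : PairIdx k → ℕ) : Prop := ∀ i : Fin k, Even (deg n i)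

lemma stepAux {m : ℕ} (f0 : ℕ → ℝ) (F : Fin m → ℕ → ℝ)
    (h0 : Summable fun n => ‖f0 n‖)
    (h1 : Summable (fun n : Fin m → ℕ => ‖∏ i, F i (n i)‖))
    (h2 : HasSum (fun n : Fin m → ℕ => ∏ i, F i (n i)) (∏ i, ∑' n, F i n)) :
    Summable (fun z : ℕ × (Fin m → ℕ) => ‖f0 z.1 * ∏ i, F i (z.2 i)‖) ∧
    HasSum (fun z : ℕ × (Fin m → ℕ) => f0 z.1 * ∏ i, F i (z.2 i))
      ((∑' n, f0 n) * ∏ i, ∑' n, F i n) := by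
  have habs := Summable.mul_norm (R := ℝ) (f := f0)
      (g := fun p : Fin m → ℕ => ∏ i, F i (p i)) h0 h1
  have hsum : Summable fun z : ℕ × (Fin m → ℕ) => f0 z.1 * ∏ i, F i (z.2 i) := habs.of_norm
  have key := HasSum.mul_eq h0.of_norm.hasSum h2 hsum.hasSum
  exact ⟨habs, key ▸ hsum.hasSum⟩

lemma auxFin : ∀ (m : ℕ) (f : Fin m → ℕ → ℝ), (∀ i, Summable fun n => ‖f i n‖) →
    Summable (fun n : Fin m → ℕ => ‖∏ i, f i (n i)‖) ∧
    HasSum (fun n : Fin m → ℕ => ∏ i, f i (n i)) (∏ i, ∑' n, f i n) := by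
  intro m
  induction m with
  | zero =>
    intro f _
    have hu : ∀ (g : (Fin 0 → ℕ) → ℝ), HasSum g (g default) := by
      intro g
      refine hasSum_single default (fun b hb => ?_)
      exact absurd (Subsingleton.elim b default) hb
    refine ⟨(hu _).summable, ?_⟩
    have := hu (fun n : Fin 0 → ℕ => ∏ i, f i (n i))
    simpa using this
  | succ m ih =>
    intro f hf
    obtain ⟨ih1, ih2⟩ := ih (fun i => f i.succ) (fun i => hf i.succ)
    obtain ⟨habs, hhs⟩ := stepAux (f 0) (fun i => f i.succ) (hf 0) ih1 ih2
    have hcomp : ∀ z : ℕ × (Fin m → ℕ),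
        (∏ i, f i (Fin.consEquiv (fun _ : Fin (m+1) => ℕ) z i))
          = f 0 z.1 * ∏ i, f i.succ (z.2 i) := by
      intro z
      rw [Fin.prod_univ_succ]
      simp [Fin.consEquiv]
    constructor
    · refine (Equiv.summable_iff (Fin.consEquiv (fun _ : Fin (m+1) => ℕ))).mp ?_
      have heq : ((fun n : Fin (m+1) → ℕ => ‖∏ i, f i (n i)‖) ∘
            (Fin.consEquiv (fun _ : Fin (m+1) => ℕ)))
          = fun z : ℕ × (Fin m → ℕ) => ‖f 0 z.1 * ∏ i, f i.succ (z.2 i)‖ := by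
        funext z; simp only [Function.comp_apply, hcomp]
      rw [heq]
      exact habs
    · refine (Equiv.hasSum_iff (Fin.consEquiv (fun _ : Fin (m+1) => ℕ))).mp ?_
      have heq : ((fun n : Fin (m+1) → ℕ => ∏ i, f i (n i)) ∘
            (Fin.consEquiv (fun _ : Fin (m+1) => ℕ)))
          = fun z : ℕ × (Fin m → ℕ) => f 0 z.1 * ∏ i, f i.succ (z.2 i) := by
        funext z; simp only [Function.comp_apply, hcomp]
      rw [heq, Fin.prod_univ_succ]
      exact hhs

lemma auxFintype (ι : Type) [Fintype ι] (f : ι → ℕ → ℝ)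
    (hf : ∀ i, Summable fun n => ‖f i n‖) :
    Summable (fun n : ι → ℕ => ‖∏ i, f i (n i)‖) ∧
    HasSum (fun n : ι → ℕ => ∏ i, f i (n i)) (∏ i, ∑' n, f i n) := by
  classical
  obtain ⟨h1, h2⟩ := auxFin (Fintype.card ι) (fun j => f ((Fintype.equivFin ι).symm j))
    (fun j => hf _)
  have hprod : ∀ p : Fin (Fintype.card ι) → ℕ,
      (∏ i, f i (((Equiv.arrowCongr (Fintype.equivFin ι) (Equiv.refl ℕ)).symm p) i))
        = ∏ j, f ((Fintype.equivFin ι).symm j) (p j) := by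
    intro p
    refine Fintype.prod_equiv (Fintype.equivFin ι) _ _ (fun i => ?_)
    simp [Equiv.arrowCongr]
  have htarget : (∏ i, ∑' n, f i n)
      = ∏ j, ∑' n, f ((Fintype.equivFin ι).symm j) n := by
    refine Fintype.prod_equiv (Fintype.equivFin ι) _ _ (fun i => ?_)
    simp
  constructor
  · refine (Equiv.summable_iff (Equiv.arrowCongr (Fintype.equivFin ι) (Equiv.refl ℕ)).symm).mp ?_
    have heq : ((fun n : ι → ℕ => ‖∏ i, f i (n i)‖) ∘
          (Equiv.arrowCongr (Fintype.equivFin ι) (Equiv.refl ℕ)).symm)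
        = fun p : Fin (Fintype.card ι) → ℕ => ‖∏ j, f ((Fintype.equivFin ι).symm j) (p j)‖ := by
      funext p; simp only [Function.comp_apply, hprod]
    rw [heq]
    exact h1
  · refine (Equiv.hasSum_iff (Equiv.arrowCongr (Fintype.equivFin ι) (Equiv.refl ℕ)).symm).mp ?_
    have heq : ((fun n : ι → ℕ => ∏ i, f i (n i)) ∘
          (Equiv.arrowCongr (Fintype.equivFin ι) (Equiv.refl ℕ)).symm)
        = fun p : Fin (Fintype.card ι) → ℕ => ∏ j, f ((Fintype.equivFin ι).symm j) (p j) := by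
      funext p; simp only [Function.comp_apply, hprod]
    rw [heq, htarget]
    exact h2

lemma expHasSum (y : ℝ) : HasSum (fun n : ℕ => y ^ n / (Nat.factorial n : ℝ)) (Real.exp y) := by
  have := NormedSpace.expSeries_div_hasSum_exp y
  rwa [← Real.exp_eq_exp_ℝ] at this

lemma expNormSummable (y : ℝ) : Summable fun n : ℕ => ‖y ^ n / (Nat.factorial n : ℝ)‖ := by
  refine (expHasSum |y|).summable.congr (fun n => ?_)
  rw [Real.norm_eq_abs, abs_div, abs_pow, Nat.abs_cast]

lemma prod_sign {k : ℕ} (x : PairIdx k → ℝ) (a : Fin k → ℝ) (n : PairIdx k → ℕ) :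
    (∏ p : PairIdx k, (a p.val.1 * a p.val.2 * x p) ^ n p / (Nat.factorial (n p) : ℝ))
      = (∏ i : Fin k, a i ^ deg n i)
        * ∏ p : PairIdx k, x p ^ n p / (Nat.factorial (n p) : ℝ) := by
  have h1 : ∀ p : PairIdx k, (a p.val.1 * a p.val.2 * x p) ^ n p / (Nat.factorial (n p) : ℝ)
      = (a p.val.1 ^ n p * a p.val.2 ^ n p) * (x p ^ n p / (Nat.factorial (n p) : ℝ)) := by
    intro p; rw [mul_pow, mul_pow, mul_div_assoc]
  rw [Finset.prod_congr rfl (fun p _ => h1 p), Finset.prod_mul_distrib]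
  congr 1
  have h2 : ∀ i : Fin k, a i ^ deg n i
      = ∏ p : PairIdx k, ((if p.val.1 = i then a i ^ n p else 1)
          * (if p.val.2 = i then a i ^ n p else 1)) := by
    intro i
    rw [deg, ← Finset.prod_pow_eq_pow_sum]
    refine Finset.prod_congr rfl (fun p _ => ?_)
    have hne : p.val.1 ≠ p.val.2 := ne_of_lt p.prop
    by_cases hp1 : p.val.1 = i <;> by_cases hp2 : p.val.2 = i
    · exact absurd (hp1.trans hp2.symm) hne
    · simp [hp1, hp2]
    · simp [hp1, hp2]
    · simp [hp1, hp2]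
  rw [Finset.prod_congr rfl (fun i (_ : i ∈ univ) => h2 i), Finset.prod_comm]
  refine Finset.prod_congr rfl (fun p _ => ?_)
  rw [Finset.prod_mul_distrib]
  congr 1
  · have := Finset.prod_ite_eq (univ : Finset (Fin k)) p.val.1 (fun i => a i ^ n p)
    rw [this]
    simp
  · have := Finset.prod_ite_eq (univ : Finset (Fin k)) p.val.2 (fun i => a i ^ n p)
    rw [this]
    simp

lemma sum_signs {k : ℕ} (d : Fin k → ℕ) [DecidablePred (Even : ℕ → Prop)]
    [Decidable (∀ i, Even (d i))] :
    ∑ a ∈ Fintype.piFinset (fun _ : Fin k => ({-1, 1} : Finset ℝ)), ∏ i, a i ^ d i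
      = if ∀ i, Even (d i) then (2:ℝ)^k else 0 := by
  have hps := Finset.prod_univ_sum (fun _ : Fin k => ({-1, 1} : Finset ℝ))
    (fun (i : Fin k) (v : ℝ) => v ^ d i)
  rw [← hps]
  have h : ∀ i : Fin k, ∑ v ∈ ({-1, 1} : Finset ℝ), v ^ d i
      = if Even (d i) then (2:ℝ) else 0 := by
    intro i
    rw [Finset.sum_pair (by norm_num : (-1:ℝ) ≠ 1)]
    rcases Nat.even_or_odd (d i) with h | h
    · rw [if_pos h, h.neg_one_pow, one_pow]; norm_num
    · rw [if_neg (Nat.not_even_iff_odd.mpr h), h.neg_one_pow, one_pow]; ring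
  rw [Finset.prod_congr rfl (fun i _ => h i)]
  by_cases hd : ∀ i, Even (d i)
  · rw [if_pos hd, Finset.prod_congr rfl (fun i _ => if_pos (hd i)), Finset.prod_const]
    simp
  · obtain ⟨i, hi⟩ := not_forall.mp hd
    rw [if_neg hd]
    exact Finset.prod_eq_zero (Finset.mem_univ i) (if_neg hi)

/-- Generating-function identity:
`∑_{a ∈ {-1,1}^k} exp(∑_{i<j} a_i a_j x_{ij}) = 2^k ∑_{n even} ∏_{i<j} x_{ij}^{n_{ij}}/n_{ij}!`,
the family on the right being summable. -/
theorem stmt_3 (k : ℕ) (x : PairIdx k → ℝ) :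
    Summable (fun n : {n : PairIdx k → ℕ // EvenFamily n} =>
      ∏ p : PairIdx k, x p ^ (n.val p) / (Nat.factorial (n.val p) : ℝ)) ∧
    ∑ a ∈ Fintype.piFinset (fun _ : Fin k => ({-1, 1} : Finset ℝ)),
        Real.exp (∑ p : PairIdx k, a p.val.1 * a p.val.2 * x p)
      = 2 ^ k * ∑' n : {n : PairIdx k → ℕ // EvenFamily n},
          ∏ p : PairIdx k, x p ^ (n.val p) / (Nat.factorial (n.val p) : ℝ) := by
  classical
  obtain ⟨hS, _⟩ := auxFintype (PairIdx k) (fun p j => x p ^ j / (Nat.factorial j : ℝ))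
    (fun p => expNormSummable (x p))
  have hsumfull : Summable (fun n : PairIdx k → ℕ =>
      ∏ p : PairIdx k, x p ^ n p / (Nat.factorial (n p) : ℝ)) := hS.of_norm
  have hexp : ∀ a : Fin k → ℝ, HasSum (fun n : PairIdx k → ℕ =>
      ∏ p : PairIdx k, (a p.val.1 * a p.val.2 * x p) ^ n p / (Nat.factorial (n p) : ℝ))
      (Real.exp (∑ p : PairIdx k, a p.val.1 * a p.val.2 * x p)) := by
    intro a
    obtain ⟨_, hH⟩ := auxFintype (PairIdx k)
      (fun p j => (a p.val.1 * a p.val.2 * x p) ^ j / (Nat.factorial j : ℝ))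
      (fun p => expNormSummable _)
    have heq : (∏ p : PairIdx k, ∑' j : ℕ,
        (a p.val.1 * a p.val.2 * x p) ^ j / (Nat.factorial j : ℝ))
        = Real.exp (∑ p : PairIdx k, a p.val.1 * a p.val.2 * x p) := by
      rw [Real.exp_sum]
      exact Finset.prod_congr rfl (fun p _ => (expHasSum _).tsum_eq)
    rwa [heq] at hH
  constructor
  · exact hsumfull.subtype {n | EvenFamily n}
  · have step1 : ∑ a ∈ Fintype.piFinset (fun _ : Fin k => ({-1, 1} : Finset ℝ)),
        Real.exp (∑ p : PairIdx k, a p.val.1 * a p.val.2 * x p)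
        = ∑ a ∈ Fintype.piFinset (fun _ : Fin k => ({-1, 1} : Finset ℝ)),
          ∑' n : PairIdx k → ℕ,
            ∏ p : PairIdx k, (a p.val.1 * a p.val.2 * x p) ^ n p / (Nat.factorial (n p) : ℝ) :=
      Finset.sum_congr rfl (fun a _ => ((hexp a).tsum_eq).symm)
    have step2 := Summable.tsum_finsetSum (s := Fintype.piFinset (fun _ : Fin k => ({-1, 1} : Finset ℝ)))
      (f := fun (a : Fin k → ℝ) (n : PairIdx k → ℕ) =>
        ∏ p : PairIdx k, (a p.val.1 * a p.val.2 * x p) ^ n p / (Nat.factorial (n p) : ℝ))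
      (fun a _ => (hexp a).summable)
    have step3 : ∀ n : PairIdx k → ℕ,
        (∑ a ∈ Fintype.piFinset (fun _ : Fin k => ({-1, 1} : Finset ℝ)),
          ∏ p : PairIdx k, (a p.val.1 * a p.val.2 * x p) ^ n p / (Nat.factorial (n p) : ℝ))
        = (if EvenFamily n then (2:ℝ)^k else 0)
          * ∏ p : PairIdx k, x p ^ n p / (Nat.factorial (n p) : ℝ) := by
      intro n
      rw [Finset.sum_congr rfl (fun a _ => prod_sign x a n), ← Finset.sum_mul, sum_signs]
      by_cases h : EvenFamily n
      · rw [if_pos h, if_pos (fun i => h i)]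
      · rw [if_neg h, if_neg (fun hh => h (fun i => hh i))]
    have hsub : (∑' n : {n : PairIdx k → ℕ // EvenFamily n},
        ∏ p : PairIdx k, x p ^ (n.val p) / (Nat.factorial (n.val p) : ℝ))
        = ∑' n : PairIdx k → ℕ, Set.indicator {n | EvenFamily n}
            (fun n => ∏ p : PairIdx k, x p ^ n p / (Nat.factorial (n p) : ℝ)) n :=
      _root_.tsum_subtype {n : PairIdx k → ℕ | EvenFamily n} (fun n => ∏ p : PairIdx k, x p ^ n p / (Nat.factorial (n p) : ℝ))
    rw [step1, ← step2, hsub, ← tsum_mul_left]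
    refine tsum_congr (fun n => ?_)
    rw [step3 n]
    by_cases h : EvenFamily n
    · rw [if_pos h, Set.indicator_of_mem (by exact h)]
    · rw [if_neg h, Set.indicator_of_notMem (by exact h), zero_mul, mul_zero]
end

section
/- Let k ∈ ℕ and let m be a pair family of nonnegative real numbers (indexed by pairs (i,j) with i < j in Fin k). Then Σ'_{n even} Π_{i<j} e^{-m_{(i,j)}} · m_{(i,j)}^{n_{(i,j)}} / (n_{(i,j)})! = 2^{-k} · Σ_{a ∈ {-1,1}^k} exp( Σ_{i<j} (a_i a_j − 1) · m_{(i,j)} ), where the sum on the left is the tsum over the set of even pair families of natural numbers. (Probabilistically: if N_{(i,j)} are independent Poisson random variables with means m_{(i,j)}, the left-hand side is the probability that the degree d_i(N) is even for every i.) -/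
open Finset

instance {k : ℕ} (n : PairIdx k → ℕ) : Decidable (EvenFamily n) := by
  unfold EvenFamily; infer_instance

/-- Expansion of `Real.exp` as a `tsum`. -/
lemma aux_exp_tsum (x : ℝ) : Real.exp x = ∑' n : ℕ, x ^ n / (Nat.factorial n : ℝ) := by
  rw [Real.exp_eq_exp_ℝ, NormedSpace.exp_eq_tsum_div]

lemma aux_summable_norm (e x : ℝ) :
    Summable fun j : ℕ => ‖e * x ^ j / (Nat.factorial j : ℝ)‖ := by
  refine Summable.congr ((Real.summable_pow_div_factorial |x|).mul_left |e|) fun j => ?_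
  rw [Real.norm_eq_abs, abs_div, abs_mul, abs_pow,
    abs_of_nonneg (by positivity : (0:ℝ) ≤ (Nat.factorial j : ℝ)), mul_div_assoc]

lemma aux_poisson_tsum (μ x : ℝ) :
    ∑' j : ℕ, Real.exp μ * x ^ j / (Nat.factorial j : ℝ) = Real.exp μ * Real.exp x := by
  simp_rw [mul_div_assoc]
  rw [tsum_mul_left, aux_exp_tsum x]

set_option maxHeartbeats 1000000 in
/-- tsum over a finite pi type of a product factorizes. -/
lemma hasSum_pi_nat (ι : Type) [Fintype ι] (f : ι → ℕ → ℝ)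
    (hf : ∀ i, Summable fun n => ‖f i n‖) :
    HasSum (fun g : ι → ℕ => ∏ i, f i (g i)) (∏ i, ∑' n, f i n) := by
  revert f hf
  refine Fintype.induction_empty_option
    (P := fun (α : Type) [Fintype α] => ∀ f : α → ℕ → ℝ,
      (∀ i, Summable fun n => ‖f i n‖) →
      HasSum (fun g : α → ℕ => ∏ i, f i (g i)) (∏ i, ∑' n, f i n)) ?_ ?_ ?_ ι
  · intro α β _ e ih f hf
    letI : Fintype α := Fintype.ofEquiv β e.symm
    have h := ih (fun a => f (e a)) (fun a => hf (e a))
    have hprod : (∏ a, ∑' n, f (e a) n) = ∏ b, ∑' n, f b n :=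
      e.prod_comp fun b => ∑' n, f b n
    rw [hprod] at h
    let d : (α → ℕ) ≃ (β → ℕ) := e.arrowCongr (Equiv.refl ℕ)
    have hkey : (fun g' : β → ℕ => ∏ b, f b (g' b)) ∘ ⇑d
        = fun g : α → ℕ => ∏ a, f (e a) (g a) := by
      funext g
      simp only [Function.comp_apply]
      rw [← e.prod_comp (fun b => f b (d g b))]
      refine Finset.prod_congr rfl fun a _ => ?_
      simp [d, Equiv.arrowCongr]
    rw [← hkey] at h
    exact d.hasSum_iff.mp h
  · intro f hf
    have h : HasSum (fun g : PEmpty → ℕ => ∏ i, f i (g i))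
        ((fun g : PEmpty → ℕ => ∏ i, f i (g i)) default) :=
      hasSum_single default fun b' hb' => absurd (Subsingleton.elim b' default) hb'
    simpa using h
  · intro ι _ ih f hf
    have h0 : HasSum (f none) (∑' n, f none n) := (hf none).of_norm.hasSum
    have h1 := ih (fun i => f (some i)) fun i => hf (some i)
    have hnorm : Summable fun g : ι → ℕ => ‖∏ i, f (some i) (g i)‖ := by
      have := (ih (fun i n => ‖f (some i) n‖) fun i => by
        simpa using (hf (some i))).summable
      refine this.congr fun g => ?_
      simp [Real.norm_eq_abs, Finset.abs_prod]
    have hs := summable_mul_of_summable_norm (hf none) hnorm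
    have h2 := HasSum.mul h0 h1 hs
    let e : (Option ι → ℕ) ≃ ℕ × (ι → ℕ) :=
      (Equiv.piOptionEquivProd (β := fun _ : Option ι => ℕ))
    have hkey : (fun x : ℕ × (ι → ℕ) => f none x.1 * ∏ i, f (some i) (x.2 i)) ∘ ⇑e
        = fun g : Option ι → ℕ => ∏ i, f i (g i) := by
      funext g
      simp [e, Equiv.piOptionEquivProd, Fintype.prod_option]
    have h3 := (e.hasSum_iff
      (f := fun x : ℕ × (ι → ℕ) => f none x.1 * ∏ i, f (some i) (x.2 i))).mpr h2
    rw [hkey] at h3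
    rw [Fintype.prod_option]
    exact h3

lemma aux_sign_sum (k : ℕ) (n : PairIdx k → ℕ) :
    ∑ a ∈ Fintype.piFinset (fun _ : Fin k => ({-1, 1} : Finset ℝ)),
        ∏ p : PairIdx k, (a p.val.1 * a p.val.2) ^ n p
      = if EvenFamily n then (2:ℝ) ^ k else 0 := by
  have step1 : ∀ a : Fin k → ℝ,
      (∏ p : PairIdx k, (a p.val.1 * a p.val.2) ^ n p) = ∏ i, a i ^ deg n i := by
    intro a
    have hp : ∀ p : PairIdx k, (a p.val.1 * a p.val.2) ^ n p
        = ∏ i, a i ^ (if p.val.1 = i ∨ p.val.2 = i then n p else 0) := by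
      intro p
      have hne : p.val.1 ≠ p.val.2 := ne_of_lt p.prop
      have hsplit : ∀ i : Fin k, a i ^ (if p.val.1 = i ∨ p.val.2 = i then n p else 0)
          = (if p.val.1 = i then a i ^ n p else 1) * (if p.val.2 = i then a i ^ n p else 1) := by
        intro i
        by_cases h1 : p.val.1 = i
        · by_cases h2 : p.val.2 = i
          · exact absurd (h1.trans h2.symm) hne
          · simp [h1, h2]
        · by_cases h2 : p.val.2 = i
          · simp [h1, h2]
          · simp [h1, h2]
      rw [Finset.prod_congr rfl fun i _ => hsplit i, Finset.prod_mul_distrib,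
        Finset.prod_ite_eq, Finset.prod_ite_eq]
      simp [mul_pow]
    calc (∏ p : PairIdx k, (a p.val.1 * a p.val.2) ^ n p)
        = ∏ p : PairIdx k, ∏ i, a i ^ (if p.val.1 = i ∨ p.val.2 = i then n p else 0) :=
          Finset.prod_congr rfl fun p _ => hp p
      _ = ∏ i, ∏ p : PairIdx k, a i ^ (if p.val.1 = i ∨ p.val.2 = i then n p else 0) :=
          Finset.prod_comm
      _ = ∏ i, a i ^ deg n i := by
          refine Finset.prod_congr rfl fun i _ => ?_
          rw [Finset.prod_pow_eq_pow_sum]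
          rfl
  have hps := Finset.prod_univ_sum (fun _ : Fin k => ({-1, 1} : Finset ℝ))
    (fun (i : Fin k) (x : ℝ) => x ^ deg n i)
  rw [Finset.sum_congr rfl fun a _ => step1 a, ← hps]
  have hpair : ∀ d : ℕ, (∑ x ∈ ({-1, 1} : Finset ℝ), x ^ d)
      = if Even d then (2:ℝ) else 0 := by
    intro d
    rw [Finset.sum_pair (by norm_num : (-1:ℝ) ≠ 1)]
    by_cases hd : Even d
    · rw [hd.neg_one_pow, if_pos hd, one_pow]; norm_num
    · rw [(Nat.not_even_iff_odd.mp hd).neg_one_pow, if_neg hd, one_pow]; ring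
  rw [Finset.prod_congr rfl fun i _ => hpair (deg n i)]
  by_cases h : EvenFamily n
  · rw [if_pos h, Finset.prod_congr rfl fun i _ => if_pos (h i), Finset.prod_const]
    simp
  · rw [if_neg h]
    obtain ⟨i, hi⟩ := not_forall.mp h
    exact Finset.prod_eq_zero (Finset.mem_univ i) (if_neg hi)

/-- The probability that independent Poisson variables with means `m_{ij}` form an even
pair family equals `2^{-k} ∑_{a ∈ {-1,1}^k} exp(∑_{i<j} (a_i a_j - 1) m_{ij})`. -/
theorem stmt_5 (k : ℕ) (m : PairIdx k → ℝ) (hm : ∀ p, 0 ≤ m p) :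
    (∑' n : {n : PairIdx k → ℕ // EvenFamily n},
        ∏ p : PairIdx k,
          Real.exp (-(m p)) * m p ^ (n.val p) / (Nat.factorial (n.val p) : ℝ))
      = (2 : ℝ) ^ (-(k : ℤ)) *
        ∑ a ∈ Fintype.piFinset (fun _ : Fin k => ({-1, 1} : Finset ℝ)),
          Real.exp (∑ p : PairIdx k, (a p.val.1 * a p.val.2 - 1) * m p) := by
  classical
  set F : (PairIdx k → ℕ) → ℝ := fun n =>
    ∏ p : PairIdx k, Real.exp (-(m p)) * m p ^ (n p) / (Nat.factorial (n p) : ℝ) with hF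
  set A := Fintype.piFinset (fun _ : Fin k => ({-1, 1} : Finset ℝ)) with hA
  set G : (Fin k → ℝ) → (PairIdx k → ℕ) → ℝ := fun a n =>
    ∏ p : PairIdx k,
      Real.exp (-(m p)) * (a p.val.1 * a p.val.2 * m p) ^ (n p) / (Nat.factorial (n p) : ℝ)
    with hG
  have h2k : (2:ℝ) ^ (-(k : ℤ)) = ((2:ℝ) ^ k)⁻¹ := by
    rw [zpow_neg, zpow_natCast]
  have h2ne : ((2:ℝ) ^ k) ≠ 0 := by positivity
  -- pointwise identity
  have hpoint : ∀ n : PairIdx k → ℕ,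
      Set.indicator {n | EvenFamily n} F n = (2:ℝ) ^ (-(k : ℤ)) * ∑ a ∈ A, G a n := by
    intro n
    have hGsplit : ∀ a : Fin k → ℝ,
        G a n = (∏ p : PairIdx k, (a p.val.1 * a p.val.2) ^ n p) * F n := by
      intro a
      rw [hG, hF, ← Finset.prod_mul_distrib]
      exact Finset.prod_congr rfl fun p _ => by rw [mul_pow]; ring
    rw [Finset.sum_congr rfl fun a _ => hGsplit a, ← Finset.sum_mul, hA, aux_sign_sum]
    by_cases h : EvenFamily n
    · rw [if_pos h, Set.indicator_of_mem (show n ∈ {n | EvenFamily n} from h), h2k]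
      field_simp
    · rw [if_neg h, Set.indicator_of_notMem (show n ∉ {n | EvenFamily n} from h)]
      ring
  -- summability of G a for each a
  have hGsum : ∀ a : Fin k → ℝ,
      HasSum (G a) (∏ p : PairIdx k,
        Real.exp (-(m p)) * Real.exp (a p.val.1 * a p.val.2 * m p)) := by
    intro a
    have h := hasSum_pi_nat (PairIdx k)
      (fun p j => Real.exp (-(m p)) * (a p.val.1 * a p.val.2 * m p) ^ j /
        (Nat.factorial j : ℝ))
      (fun p => aux_summable_norm _ _)
    have hval : (∏ p : PairIdx k, ∑' j : ℕ,
          Real.exp (-(m p)) * (a p.val.1 * a p.val.2 * m p) ^ j / (Nat.factorial j : ℝ))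
        = ∏ p : PairIdx k, Real.exp (-(m p)) * Real.exp (a p.val.1 * a p.val.2 * m p) :=
      Finset.prod_congr rfl fun p _ => aux_poisson_tsum _ _
    rw [hval] at h
    exact h
  calc (∑' n : {n : PairIdx k → ℕ // EvenFamily n}, F n.val)
      = ∑' n : PairIdx k → ℕ, Set.indicator {n | EvenFamily n} F n :=
        tsum_subtype {n | EvenFamily n} F
    _ = ∑' n : PairIdx k → ℕ, (2:ℝ) ^ (-(k : ℤ)) * ∑ a ∈ A, G a n :=
        tsum_congr hpoint
    _ = (2:ℝ) ^ (-(k : ℤ)) * ∑' n : PairIdx k → ℕ, ∑ a ∈ A, G a n := tsum_mul_left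
    _ = (2:ℝ) ^ (-(k : ℤ)) * ∑ a ∈ A, ∑' n : PairIdx k → ℕ, G a n := by
        rw [Summable.tsum_finsetSum fun a _ => (hGsum a).summable]
    _ = (2:ℝ) ^ (-(k : ℤ)) * ∑ a ∈ A,
          Real.exp (∑ p : PairIdx k, (a p.val.1 * a p.val.2 - 1) * m p) := by
        refine congrArg _ (Finset.sum_congr rfl fun a _ => ?_)
        rw [(hGsum a).tsum_eq, Real.exp_sum]
        refine Finset.prod_congr rfl fun p _ => ?_
        rw [← Real.exp_add]
        congr 1
        ring
end

section
/- Consider the real function f(s) = (1 + s − 2s²)/(1 − s²) − 1/(2(1 − s)). Then (5 − 2√2)/4 is the greatest value of f on the open interval (−1, 1): the point 3 − 2√2 lies in (−1,1), f(3 − 2√2) = (5 − 2√2)/4, and f(s) ≤ (5 − 2√2)/4 for every s ∈ (−1, 1). -/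
open Real Set

/-- The function `f(s) = (1 + s - 2s²)/(1 - s²) - 1/(2(1 - s))` attains its greatest value
on `(-1, 1)` at the point `3 - 2√2`, and this maximal value is `(5 - 2√2)/4`. -/
theorem stmt_8 (f : ℝ → ℝ)
    (hf : ∀ s : ℝ, f s = (1 + s - 2 * s ^ 2) / (1 - s ^ 2) - 1 / (2 * (1 - s))) :
    (3 - 2 * Real.sqrt 2) ∈ Ioo (-1 : ℝ) 1 ∧
    f (3 - 2 * Real.sqrt 2) = (5 - 2 * Real.sqrt 2) / 4 ∧
    IsGreatest (f '' Ioo (-1 : ℝ) 1) ((5 - 2 * Real.sqrt 2) / 4) := by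
  have hr : Real.sqrt 2 ^ 2 = 2 := Real.sq_sqrt (by norm_num)
  have hr1 : 1 < Real.sqrt 2 := by
    nlinarith [Real.sqrt_nonneg 2]
  have hr2 : Real.sqrt 2 < 3 / 2 := by
    nlinarith [Real.sqrt_nonneg 2]
  have hmem : (3 - 2 * Real.sqrt 2) ∈ Ioo (-1 : ℝ) 1 := by
    constructor <;> nlinarith
  -- simplification of f on the interval
  have hsimp : ∀ s ∈ Ioo (-1 : ℝ) 1, f s = (1 + s - 4 * s ^ 2) / (2 * (1 - s ^ 2)) := by
    intro s hs
    have h1 : (0:ℝ) < 1 - s := by linarith [hs.2]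
    have h2 : (0:ℝ) < 1 + s := by linarith [hs.1]
    have h3 : (1:ℝ) - s ^ 2 ≠ 0 := by nlinarith
    rw [hf]
    field_simp
    ring
  have hval : f (3 - 2 * Real.sqrt 2) = (5 - 2 * Real.sqrt 2) / 4 := by
    rw [hsimp _ hmem]
    have h3 : (0:ℝ) < 1 - (3 - 2 * Real.sqrt 2) ^ 2 := by nlinarith
    rw [div_eq_div_iff (by linarith) (by norm_num)]
    nlinarith [hr]
  refine ⟨hmem, hval, ⟨⟨3 - 2 * Real.sqrt 2, hmem, hval⟩, ?_⟩⟩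
  rintro y ⟨s, hs, rfl⟩
  rw [hsimp _ hs]
  have h3 : (0:ℝ) < 1 - s ^ 2 := by nlinarith [hs.1, hs.2]
  rw [div_le_div_iff₀ (by linarith) (by norm_num)]
  nlinarith [sq_nonneg (s - (3 - 2 * Real.sqrt 2)), hr, hr1]
end

section
/- Let k ∈ ℕ, let m be a pair family of nonnegative reals and t a pair family of reals with 0 ≤ t_{(i,j)} ≤ 1 (indexed by pairs (i,j) with i < j in Fin k). Let (Ω, 𝓕, P) be a probability space carrying an independent family of random variables N_{(i,j)} : Ω → ℕ such that the law of N_{(i,j)} is Poisson with parameter m_{(i,j)}. Let ℰ be the event that the degree d_i(N) is even for every i ∈ Fin k. Then P(ℰ) > 0 and E[ Π_{i<j} t_{(i,j)}^{N_{(i,j)}} | ℰ ] = ( Σ_{a ∈ {-1,1}^k} exp( Σ_{i<j} a_i a_j m_{(i,j)} t_{(i,j)} ) ) / ( Σ_{a ∈ {-1,1}^k} exp( Σ_{i<j} a_i a_j m_{(i,j)} ) ). -/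
set_option maxHeartbeats 1000000


open Finset MeasureTheory ProbabilityTheory ENNReal

lemma aux_poisson_integral {Ω : Type*} [MeasurableSpace Ω] (P : Measure Ω)
    [IsProbabilityMeasure P] (X : Ω → ℕ) (hX : Measurable X) (μ : ℝ) (hμ : 0 ≤ μ)
    (hlaw : ∀ n : ℕ, P {ω | X ω = n}
      = ENNReal.ofReal (Real.exp (-μ) * μ ^ n / (Nat.factorial n : ℝ)))
    (s : ℝ) (hs : |s| ≤ 1) :
    ∫ ω, s ^ X ω ∂P = Real.exp (-μ) * Real.exp (μ * s) := by
  have hmap : ∫ ω, s ^ X ω ∂P = ∫ n, s ^ n ∂(P.map X) :=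
    (integral_map hX.aemeasurable measurable_from_nat.aestronglyMeasurable).symm
  haveI : IsProbabilityMeasure (P.map X) := Measure.isProbabilityMeasure_map hX.aemeasurable
  have hint : Integrable (fun n : ℕ => s ^ n) (P.map X) := by
    refine (integrable_const (1 : ℝ)).mono' measurable_from_nat.aestronglyMeasurable ?_
    refine Filter.Eventually.of_forall fun n => ?_
    rw [Real.norm_eq_abs, abs_pow]
    exact pow_le_one₀ (abs_nonneg s) hs
  have hsing : ∀ n : ℕ, ((P.map X) {n}).toReal
      = Real.exp (-μ) * μ ^ n / (Nat.factorial n : ℝ) := by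
    intro n
    rw [Measure.map_apply hX (measurableSet_singleton n)]
    have : X ⁻¹' {n} = {ω | X ω = n} := rfl
    rw [this, hlaw n, ENNReal.toReal_ofReal]
    positivity
  rw [hmap, integral_countable' hint]
  have : ∀ n : ℕ, ((P.map X) {n}).toReal • s ^ n
      = Real.exp (-μ) * ((μ * s) ^ n / (Nat.factorial n : ℝ)) := by
    intro n
    rw [hsing n, smul_eq_mul, mul_pow]
    ring
  simp only [measureReal_def]
  rw [tsum_congr this, tsum_mul_left]
  congr 1
  rw [Real.exp_eq_exp_ℝ, NormedSpace.exp_eq_tsum_div]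

lemma aux_integral_prod {Ω : Type*} [MeasurableSpace Ω] (P : Measure Ω)
    [IsProbabilityMeasure P] {ι : Type*} (Y : ι → Ω → ℝ) (hmeas : ∀ i, Measurable (Y i))
    (hindep : iIndepFun Y P) (s : Finset ι) :
    ∫ ω, ∏ i ∈ s, Y i ω ∂P = ∏ i ∈ s, ∫ ω, Y i ω ∂P := by
  classical
  induction s using Finset.induction with
  | empty => simp
  | @insert a s ha ih =>
    simp only [Finset.prod_insert ha]
    have hprod : ∀ ω, ∏ i ∈ s, Y i ω = (∏ i ∈ s, Y i) ω := by
      intro ω; rw [Finset.prod_apply]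
    have hindep2 : IndepFun (Y a) (∏ j ∈ s, Y j) P :=
      (hindep.indepFun_finsetProd_of_notMem hmeas ha).symm
    have hpm : AEStronglyMeasurable (∏ j ∈ s, Y j) P := by
      have := (s.measurable_prod (fun i _ => hmeas i)).aestronglyMeasurable (μ := P)
      refine this.congr (Filter.Eventually.of_forall fun ω => (hprod ω))
    have := hindep2.integral_mul_eq_mul_integral (hmeas a).aestronglyMeasurable hpm
    calc ∫ ω, Y a ω * ∏ i ∈ s, Y i ω ∂P
        = ∫ ω, (Y a * ∏ j ∈ s, Y j) ω ∂P := by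
          congr 1; funext ω; simp only [Pi.mul_apply, Finset.prod_apply]
      _ = (∫ ω, Y a ω ∂P) * ∫ ω, (∏ j ∈ s, Y j) ω ∂P := this
      _ = (∫ ω, Y a ω ∂P) * ∏ i ∈ s, ∫ ω, Y i ω ∂P := by
          rw [← ih]; congr 1; exact integral_congr_ae (Filter.Eventually.of_forall
            fun ω => (hprod ω).symm)

lemma aux_prod_sign {k : ℕ} (a : Fin k → ℝ) (n : PairIdx k → ℕ) :
    ∏ p : PairIdx k, (a p.val.1 * a p.val.2) ^ n p = ∏ i, a i ^ deg n i := by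
  unfold deg
  have h1 : ∀ i : Fin k, a i ^ (∑ p : PairIdx k, if p.val.1 = i ∨ p.val.2 = i then n p else 0)
      = ∏ p : PairIdx k, a i ^ (if p.val.1 = i ∨ p.val.2 = i then n p else 0) := by
    intro i
    rw [← Finset.prod_pow_eq_pow_sum]
  simp_rw [h1]
  rw [Finset.prod_comm]
  refine Finset.prod_congr rfl fun p _ => ?_
  have hne : p.val.1 ≠ p.val.2 := ne_of_lt p.prop
  have h2 : ∀ i : Fin k, (if p.val.1 = i ∨ p.val.2 = i then n p else 0)
      = (if p.val.1 = i then n p else 0) + (if p.val.2 = i then n p else 0) := by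
    intro i
    by_cases h : p.val.1 = i
    · have : p.val.2 ≠ i := fun hc => hne (h.trans hc.symm)
      simp [h, this]
    · by_cases h' : p.val.2 = i <;> simp [h, h']
  simp_rw [h2, pow_add, Finset.prod_mul_distrib]
  have h3 : ∀ (j : Fin k), (∏ i : Fin k, a i ^ (if j = i then n p else 0)) = a j ^ n p := by
    intro j
    have : ∀ i : Fin k, a i ^ (if j = i then n p else 0) = if j = i then a i ^ n p else 1 := by
      intro i; split_ifs <;> simp
    simp_rw [this]
    simp [Finset.prod_ite_eq]
  rw [h3 p.val.1, h3 p.val.2, mul_pow]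

lemma aux_sign {k : ℕ} (n : PairIdx k → ℕ) (t : PairIdx k → ℝ) :
    ∑ a ∈ Fintype.piFinset (fun _ : Fin k => ({-1, 1} : Finset ℝ)),
        ∏ p : PairIdx k, (a p.val.1 * a p.val.2 * t p) ^ n p
      = (if ∀ i : Fin k, Even (deg n i) then (2:ℝ)^k else 0) * ∏ p : PairIdx k, t p ^ n p := by
  have h1 : ∀ a : Fin k → ℝ,
      ∏ p : PairIdx k, (a p.val.1 * a p.val.2 * t p) ^ n p
        = (∏ i, a i ^ deg n i) * ∏ p : PairIdx k, t p ^ n p := by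
    intro a
    rw [← aux_prod_sign a n, ← Finset.prod_mul_distrib]
    exact Finset.prod_congr rfl fun p _ => (mul_pow _ _ _)
  simp_rw [h1, ← Finset.sum_mul]
  congr 1
  rw [← Finset.prod_univ_sum (fun _ : Fin k => ({-1,1} : Finset ℝ)) (fun i x => x ^ deg n i)]
  have h2 : ∀ i : Fin k, (∑ x ∈ ({-1, 1} : Finset ℝ), x ^ deg n i)
      = (-1 : ℝ) ^ deg n i + 1 := by
    intro i
    rw [Finset.sum_pair (by norm_num : (-1:ℝ) ≠ 1)]
    simp
  simp_rw [h2]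
  by_cases h : ∀ i : Fin k, Even (deg n i)
  · rw [if_pos h]
    have : ∀ i : Fin k, (-1 : ℝ) ^ deg n i + 1 = 2 := by
      intro i; rw [(h i).neg_one_pow]; norm_num
    simp_rw [this]
    simp
  · rw [if_neg h]
    push_neg at h
    obtain ⟨i, hi⟩ := h
    refine Finset.prod_eq_zero (Finset.mem_univ i) ?_
    rw [(Nat.not_even_iff_odd.mp hi).neg_one_pow]
    ring

/-- Laplace transform of independent Poisson crossing-numbers conditioned on all degrees
being even:  `P(ℰ) > 0` and
`E[∏ t_{ij}^{N_{ij}} | ℰ] = (∑_a exp(∑ a_i a_j m_{ij} t_{ij})) / (∑_a exp(∑ a_i a_j m_{ij}))`. -/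
theorem stmt_9 (k : ℕ) (m : PairIdx k → ℝ) (hm : ∀ p, 0 ≤ m p)
    (t : PairIdx k → ℝ) (ht : ∀ p, 0 ≤ t p ∧ t p ≤ 1)
    {Ω : Type*} [MeasurableSpace Ω] (P : Measure Ω) [IsProbabilityMeasure P]
    (N : PairIdx k → Ω → ℕ) (hNmeas : ∀ p, Measurable (N p))
    (hindep : iIndepFun N P)
    (hlaw : ∀ p : PairIdx k, ∀ n : ℕ,
      P {ω | N p ω = n}
        = ENNReal.ofReal (Real.exp (-(m p)) * m p ^ n / (Nat.factorial n : ℝ)))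
    (ℰ : Set Ω) (hℰ : ℰ = {ω | ∀ i : Fin k, Even (deg (fun p => N p ω) i)}) :
    0 < P ℰ ∧
    (∫ ω in ℰ, ∏ p : PairIdx k, t p ^ (N p ω) ∂P) / (P ℰ).toReal
      = (∑ a ∈ Fintype.piFinset (fun _ : Fin k => ({-1, 1} : Finset ℝ)),
          Real.exp (∑ p : PairIdx k, a p.val.1 * a p.val.2 * (m p * t p)))
        / (∑ a ∈ Fintype.piFinset (fun _ : Fin k => ({-1, 1} : Finset ℝ)),
          Real.exp (∑ p : PairIdx k, a p.val.1 * a p.val.2 * m p)) := by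
  classical
  set A := Fintype.piFinset (fun _ : Fin k => ({-1, 1} : Finset ℝ)) with hA
  -- measurability of ℰ
  have Dmeas : ∀ i : Fin k, Measurable (fun ω => deg (fun p => N p ω) i) := by
    intro i
    unfold deg
    apply Finset.measurable_sum
    intro p _
    by_cases h : p.val.1 = i ∨ p.val.2 = i
    · simpa [h] using hNmeas p
    · simpa [h] using (measurable_const : Measurable (fun _ : Ω => (0:ℕ)))
  have hEmeas : MeasurableSet ℰ := by
    rw [hℰ]
    have : {ω | ∀ i : Fin k, Even (deg (fun p => N p ω) i)}
        = ⋂ i : Fin k, (fun ω => deg (fun p => N p ω) i) ⁻¹' {d : ℕ | Even d} := by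
      ext ω; simp [Set.mem_iInter]
    rw [this]
    exact MeasurableSet.iInter fun i => (Dmeas i) trivial
  -- membership facts for sign vectors
  have habs : ∀ a ∈ A, ∀ i : Fin k, |a i| = 1 := by
    intro a ha i
    have := Fintype.mem_piFinset.mp ha i
    rcases Finset.mem_insert.mp this with h | h
    · rw [h]; norm_num
    · rw [Finset.mem_singleton.mp h]; norm_num
  -- measurability and integrability of bounded products
  have hFmeas : ∀ c : PairIdx k → ℝ,
      Measurable (fun ω => ∏ p : PairIdx k, (c p) ^ (N p ω)) :=
    fun c => Finset.measurable_prod _ fun p _ => measurable_from_nat.comp (hNmeas p)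
  have hFint : ∀ c : PairIdx k → ℝ, (∀ p, |c p| ≤ 1) →
      Integrable (fun ω => ∏ p : PairIdx k, (c p) ^ (N p ω)) P := by
    intro c hc
    refine (integrable_const (1:ℝ)).mono' (hFmeas c).aestronglyMeasurable ?_
    refine Filter.Eventually.of_forall fun ω => ?_
    rw [Real.norm_eq_abs, Finset.abs_prod]
    refine Finset.prod_le_one (fun p _ => abs_nonneg _) (fun p _ => ?_)
    rw [abs_pow]; exact pow_le_one₀ (abs_nonneg _) (hc p)
  -- the key computation, for any family of parameters in [0,1]
  have key : ∀ u : PairIdx k → ℝ, (∀ p, 0 ≤ u p ∧ u p ≤ 1) →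
      ∫ ω in ℰ, ∏ p : PairIdx k, u p ^ (N p ω) ∂P
        = ((2:ℝ)⁻¹)^k * Real.exp (-∑ p : PairIdx k, m p)
            * ∑ a ∈ A, Real.exp (∑ p : PairIdx k, a p.val.1 * a p.val.2 * (m p * u p)) := by
    intro u hu
    have hcu : ∀ a ∈ A, ∀ p : PairIdx k, |a p.val.1 * a p.val.2 * u p| ≤ 1 := by
      intro a ha p
      rw [abs_mul, abs_mul, habs a ha, habs a ha, one_mul, one_mul, abs_of_nonneg (hu p).1]
      exact (hu p).2
    -- pointwise identity
    have hpt : ∀ ω, ℰ.indicator (fun ω => ∏ p : PairIdx k, u p ^ (N p ω)) ω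
        = ((2:ℝ)⁻¹)^k
            * ∑ a ∈ A, ∏ p : PairIdx k, (a p.val.1 * a p.val.2 * u p) ^ (N p ω) := by
      intro ω
      rw [aux_sign (fun p => N p ω) u]
      by_cases hω : ω ∈ ℰ
      · have h' : ∀ i : Fin k, Even (deg (fun p => N p ω) i) := by
          rw [hℰ] at hω; exact hω
        rw [Set.indicator_of_mem hω, if_pos h', ← mul_assoc, ← mul_pow]
        norm_num
      · have h' : ¬ ∀ i : Fin k, Even (deg (fun p => N p ω) i) := by
          rw [hℰ] at hω; exact hω
        rw [Set.indicator_of_notMem hω, if_neg h']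
        simp
    calc ∫ ω in ℰ, ∏ p : PairIdx k, u p ^ (N p ω) ∂P
        = ∫ ω, ℰ.indicator (fun ω => ∏ p : PairIdx k, u p ^ (N p ω)) ω ∂P :=
          (integral_indicator hEmeas).symm
      _ = ∫ ω, ((2:ℝ)⁻¹)^k
            * ∑ a ∈ A, ∏ p : PairIdx k, (a p.val.1 * a p.val.2 * u p) ^ (N p ω) ∂P := by
          exact integral_congr_ae (Filter.Eventually.of_forall hpt)
      _ = ((2:ℝ)⁻¹)^k * ∑ a ∈ A,
            ∫ ω, ∏ p : PairIdx k, (a p.val.1 * a p.val.2 * u p) ^ (N p ω) ∂P := by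
          rw [integral_const_mul]
          congr 1
          exact integral_finset_sum A fun a ha => hFint _ (hcu a ha)
      _ = ((2:ℝ)⁻¹)^k * Real.exp (-∑ p : PairIdx k, m p)
            * ∑ a ∈ A, Real.exp (∑ p : PairIdx k, a p.val.1 * a p.val.2 * (m p * u p)) := by
          rw [mul_assoc]
          congr 1
          rw [Finset.mul_sum]
          refine Finset.sum_congr rfl fun a ha => ?_
          set c : PairIdx k → ℝ := fun p => a p.val.1 * a p.val.2 * u p with hc
          have hY : iIndepFun
              (fun p => (fun x : ℕ => (c p) ^ x) ∘ N p) P :=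
            hindep.comp (fun p (x : ℕ) => (c p) ^ x) (fun p => measurable_from_nat)
          have := aux_integral_prod P (fun p => (fun x : ℕ => (c p) ^ x) ∘ N p)
            (fun p => measurable_from_nat.comp (hNmeas p)) hY Finset.univ
          simp only [Function.comp] at this
          rw [this]
          have hpois : ∀ p : PairIdx k,
              ∫ ω, (c p) ^ (N p ω) ∂P = Real.exp (-(m p)) * Real.exp (m p * c p) :=
            fun p => aux_poisson_integral P (N p) (hNmeas p) (m p) (hm p) (hlaw p)
              (c p) (hcu a ha p)
          rw [Finset.prod_congr rfl (fun p _ => hpois p), Finset.prod_mul_distrib,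
            ← Real.exp_sum, ← Real.exp_sum]
          congr 1
          · rw [Finset.sum_neg_distrib]
          · exact congrArg Real.exp (Finset.sum_congr rfl fun p _ => by rw [hc]; ring)
  have hnum := key t ht
  have hden := key (fun _ => (1:ℝ)) (fun p => ⟨zero_le_one, le_refl 1⟩)
  have hden' : (P ℰ).toReal
      = ((2:ℝ)⁻¹)^k * Real.exp (-∑ p : PairIdx k, m p)
          * ∑ a ∈ A, Real.exp (∑ p : PairIdx k, a p.val.1 * a p.val.2 * m p) := by
    have h1 : ∫ ω in ℰ, ∏ p : PairIdx k, (1:ℝ) ^ (N p ω) ∂P = (P ℰ).toReal := by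
      simp [measureReal_def]
    calc (P ℰ).toReal
        = ∫ ω in ℰ, ∏ p : PairIdx k, (1:ℝ) ^ (N p ω) ∂P := h1.symm
      _ = ((2:ℝ)⁻¹)^k * Real.exp (-∑ p : PairIdx k, m p)
          * ∑ a ∈ A, Real.exp (∑ p : PairIdx k, a p.val.1 * a p.val.2 * (m p * 1)) := hden
      _ = ((2:ℝ)⁻¹)^k * Real.exp (-∑ p : PairIdx k, m p)
          * ∑ a ∈ A, Real.exp (∑ p : PairIdx k, a p.val.1 * a p.val.2 * m p) := by
          exact congrArg
            (fun S => ((2:ℝ)⁻¹)^k * Real.exp (-∑ p : PairIdx k, m p) * S)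
            (Finset.sum_congr rfl fun a _ => congrArg Real.exp
              (Finset.sum_congr rfl fun p _ => by rw [mul_one]))
  have hS1 : 0 < ∑ a ∈ A, Real.exp (∑ p : PairIdx k, a p.val.1 * a p.val.2 * m p) := by
    refine Finset.sum_pos (fun a _ => Real.exp_pos _) ?_
    exact Fintype.piFinset_nonempty.mpr fun _ => ⟨1, by simp⟩
  have hC : (0:ℝ) < ((2:ℝ)⁻¹)^k * Real.exp (-∑ p : PairIdx k, m p) := by positivity
  have hPpos : 0 < (P ℰ).toReal := by
    rw [hden']
    exact mul_pos hC hS1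
  constructor
  · exact (ENNReal.toReal_pos_iff.mp hPpos).1
  · rw [hnum, hden']
    exact mul_div_mul_left _ _ hC.ne'
end

section
/- Let k ≥ 2 and let x be a pair family of real numbers (indexed by pairs (i,j) with i < j in Fin k). Then the family of terms Π_{i<j} x_{(i,j)}^{n_{(i,j)}} / (n_{(i,j)})!, indexed by those pair families n of natural numbers whose degrees d_0(n) and d_1(n) are odd while d_i(n) is even for every i ∉ {0,1}, is summable, and Σ_{a ∈ {-1,1}^k} a_0 · a_1 · exp( Σ_{i<j} a_i a_j x_{(i,j)} ) = 2^k · Σ'_{n with that parity pattern} Π_{i<j} x_{(i,j)}^{n_{(i,j)}} / (n_{(i,j)})!. -/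
open Finset

lemma expser_norm (y : ℝ) : Summable fun m : ℕ => ‖y ^ m / (Nat.factorial m : ℝ)‖ := by
  refine (Real.summable_pow_div_factorial |y|).congr fun m => ?_
  rw [norm_div, norm_pow, Real.norm_eq_abs, Real.norm_natCast]

lemma fin_pi_hasSum : ∀ (m : ℕ) (f : Fin m → ℕ → ℝ), (∀ i, Summable fun n => ‖f i n‖) →
    (Summable fun g : Fin m → ℕ => ‖∏ i, f i (g i)‖) ∧
      HasSum (fun g : Fin m → ℕ => ∏ i, f i (g i)) (∏ i, ∑' n, f i n) := by
  intro m
  induction m with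
  | zero =>
    intro f hf
    constructor
    · exact Summable.of_finite
    · simpa using hasSum_fintype (fun g : Fin 0 → ℕ => ∏ i, f i (g i))
  | succ m ih =>
    intro f hf
    obtain ⟨hsum, hS⟩ := ih (fun i => f i.succ) (fun i => hf i.succ)
    set G : (Fin m → ℕ) → ℝ := fun g => ∏ i, f i.succ (g i) with hG
    have hFnorm : Summable (fun q : ℕ × (Fin m → ℕ) => ‖f 0 q.1 * G q.2‖) := by
      have h := (hf 0).mul_of_nonneg hsum (fun _ => norm_nonneg _) (fun _ => norm_nonneg _)
      exact h.congr fun q => (norm_mul _ _).symm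
    have hF : Summable (fun q : ℕ × (Fin m → ℕ) => f 0 q.1 * G q.2) := hFnorm.of_norm
    have htsum : ∑' q : ℕ × (Fin m → ℕ), f 0 q.1 * G q.2 = (∑' n, f 0 n) * ∑' g, G g :=
      (tsum_mul_tsum_of_summable_norm (hf 0) hsum).symm
    set e : (Fin (m+1) → ℕ) ≃ ℕ × (Fin m → ℕ) :=
      ⟨fun g => (g 0, fun i => g i.succ), fun q => Fin.cons q.1 q.2,
        fun g => funext fun i => Fin.cases rfl (fun j => rfl) i,
        fun q => rfl⟩ with he
    have key : ∀ g : Fin (m+1) → ℕ, ∏ i, f i (g i) = f 0 (g 0) * G (fun i => g i.succ) :=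
      fun g => Fin.prod_univ_succ _
    constructor
    · refine (e.summable_iff.mpr hFnorm).congr fun g => ?_
      simp only [Function.comp, he, Equiv.coe_fn_mk]
      rw [key g]
      rfl
    · have h1 : HasSum (fun q : ℕ × (Fin m → ℕ) => f 0 q.1 * G q.2)
          ((∑' n, f 0 n) * ∏ i, ∑' n, f (Fin.succ i) n) := by
        have := hF.hasSum
        rwa [htsum, hS.tsum_eq] at this
      have h2 := e.hasSum_iff.mpr h1
      have h3 : (fun g : Fin (m+1) → ℕ => ∏ i, f i (g i)) =
          (fun q : ℕ × (Fin m → ℕ) => f 0 q.1 * G q.2) ∘ e := by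
        funext g
        exact key g
      rw [h3, Fin.prod_univ_succ (fun i => ∑' n, f i n)]
      exact h2

lemma pi_hasSum {ι : Type*} [Fintype ι] (f : ι → ℕ → ℝ)
    (hf : ∀ i, Summable fun n => ‖f i n‖) :
    (Summable fun g : ι → ℕ => ‖∏ i, f i (g i)‖) ∧
      HasSum (fun g : ι → ℕ => ∏ i, f i (g i)) (∏ i, ∑' n, f i n) := by
  obtain ⟨e⟩ : Nonempty (ι ≃ Fin (Fintype.card ι)) := ⟨Fintype.equivFin ι⟩
  obtain ⟨h1, h2⟩ := fin_pi_hasSum (Fintype.card ι) (fun j => f (e.symm j)) (fun j => hf _)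
  set e2 : (ι → ℕ) ≃ (Fin (Fintype.card ι) → ℕ) :=
    ⟨fun g j => g (e.symm j), fun h i => h (e i),
      fun g => funext fun i => by simp, fun h => funext fun j => by simp⟩ with he2
  have key : ∀ g : ι → ℕ, ∏ i, f i (g i) = ∏ j, f (e.symm j) (e2 g j) := by
    intro g
    rw [← Equiv.prod_comp e.symm (fun i => f i (g i))]
    rfl
  have htgt : (∏ j, ∑' n, f (e.symm j) n) = ∏ i, ∑' n, f i n :=
    Equiv.prod_comp e.symm (fun i => ∑' n, f i n)
  constructor
  · refine (e2.summable_iff.mpr h1).congr fun g => ?_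
    simp only [Function.comp]
    rw [key g]
  · have h3 : (fun g : ι → ℕ => ∏ i, f i (g i)) =
        (fun h : Fin (Fintype.card ι) → ℕ => ∏ j, f (e.symm j) (h j)) ∘ e2 := by
      funext g; exact key g
    rw [h3, ← htgt]
    exact e2.hasSum_iff.mpr h2

lemma exp_tsum (y : ℝ) : Real.exp y = ∑' m : ℕ, y ^ m / (Nat.factorial m : ℝ) := by
  rw [Real.exp_eq_exp_ℝ, NormedSpace.exp_eq_tsum_div]

lemma rearr {k : ℕ} (i0 i1 : Fin k) (h01 : i0 ≠ i1) (n : PairIdx k → ℕ) (a : Fin k → ℝ) :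
    a i0 * a i1 * ∏ p : PairIdx k, (a p.val.1 * a p.val.2) ^ n p
      = ∏ i : Fin k, (a i) ^ (deg n i + (if i = i0 ∨ i = i1 then 1 else 0)) := by
  have h1 : ∀ p : PairIdx k, (a p.val.1 * a p.val.2) ^ n p
      = ∏ i : Fin k, (a i) ^ (if p.val.1 = i ∨ p.val.2 = i then n p else 0) := by
    intro p
    have hne : p.val.1 ≠ p.val.2 := ne_of_lt p.2
    have hsplit : ∀ i : Fin k, (if p.val.1 = i ∨ p.val.2 = i then n p else 0)
        = (if p.val.1 = i then n p else 0) + (if p.val.2 = i then n p else 0) := by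
      intro i
      by_cases ha : p.val.1 = i <;> by_cases hb : p.val.2 = i
      · exact absurd (ha.trans hb.symm) hne
      all_goals simp [ha, hb]
    simp_rw [hsplit, pow_add, Finset.prod_mul_distrib, pow_ite, pow_zero,
      Finset.prod_ite_eq, Finset.mem_univ, if_true, mul_pow]
  simp_rw [h1]
  rw [Finset.prod_comm]
  have h2 : ∀ i : Fin k,
      (∏ p : PairIdx k, (a i) ^ (if p.val.1 = i ∨ p.val.2 = i then n p else 0))
        = (a i) ^ (deg n i) := fun i => Finset.prod_pow_eq_pow_sum _ _ _
  have h3 : ∀ i : Fin k, (a i) ^ (if i = i0 ∨ i = i1 then 1 else 0)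
      = (if i ∈ ({i0, i1} : Finset (Fin k)) then a i else 1) := by
    intro i
    by_cases h : i = i0 ∨ i = i1 <;>
      simp [h, Finset.mem_insert, Finset.mem_singleton]
  have h4 : ∏ i : Fin k, (a i) ^ (if i = i0 ∨ i = i1 then 1 else 0) = a i0 * a i1 := by
    rw [Finset.prod_congr rfl fun i _ => h3 i, Finset.prod_ite_mem,
      Finset.univ_inter, Finset.prod_pair h01]
  calc a i0 * a i1 * ∏ i : Fin k, (∏ p : PairIdx k,
        (a i) ^ (if p.val.1 = i ∨ p.val.2 = i then n p else 0))
      = (∏ i : Fin k, (a i) ^ (deg n i)) *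
          ∏ i : Fin k, (a i) ^ (if i = i0 ∨ i = i1 then 1 else 0) := by
        rw [h4, Finset.prod_congr rfl fun i _ => h2 i]; ring
    _ = ∏ i : Fin k, (a i) ^ (deg n i + (if i = i0 ∨ i = i1 then 1 else 0)) := by
        rw [← Finset.prod_mul_distrib]
        exact Finset.prod_congr rfl fun i _ => (pow_add _ _ _).symm

lemma signSum {k : ℕ} (i0 i1 : Fin k) (h01 : i0 ≠ i1) (n : PairIdx k → ℕ) :
    ∑ a ∈ Fintype.piFinset (fun _ : Fin k => ({-1, 1} : Finset ℝ)),
      (a i0 * a i1 * ∏ p : PairIdx k, (a p.val.1 * a p.val.2) ^ n p)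
    = ∏ i : Fin k, ((-1 : ℝ) ^ (deg n i + (if i = i0 ∨ i = i1 then 1 else 0)) + 1) := by
  have hps := Finset.prod_univ_sum (fun _ : Fin k => ({-1, 1} : Finset ℝ))
    (fun i y => y ^ (deg n i + if i = i0 ∨ i = i1 then 1 else 0))
  rw [Finset.sum_congr rfl (fun a _ => rearr i0 i1 h01 n a), ← hps]
  refine Finset.prod_congr rfl fun i _ => ?_
  rw [Finset.sum_pair (by norm_num : (-1 : ℝ) ≠ 1), one_pow]

def Pred {k : ℕ} (i0 i1 : Fin k) (n : PairIdx k → ℕ) : Prop :=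
  Odd (deg n i0) ∧ Odd (deg n i1) ∧ ∀ i : Fin k, i ≠ i0 → i ≠ i1 → Even (deg n i)

lemma parity_pos {k : ℕ} {i0 i1 : Fin k} {n : PairIdx k → ℕ} (h : Pred i0 i1 n) :
    (∏ i : Fin k, ((-1 : ℝ) ^ (deg n i + (if i = i0 ∨ i = i1 then 1 else 0)) + 1))
      = (2 : ℝ) ^ k := by
  obtain ⟨h0, h1, h2⟩ := h
  have key : ∀ i : Fin k,
      ((-1 : ℝ) ^ (deg n i + (if i = i0 ∨ i = i1 then 1 else 0)) + 1) = 2 := by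
    intro i
    have heven : Even (deg n i + (if i = i0 ∨ i = i1 then 1 else 0)) := by
      by_cases hi : i = i0 ∨ i = i1
      · rw [if_pos hi]
        rcases hi with rfl | rfl
        · exact h0.add_one
        · exact h1.add_one
      · rw [if_neg hi]
        push_neg at hi
        simpa using h2 i hi.1 hi.2
    rw [heven.neg_one_pow]; norm_num
  rw [Finset.prod_congr rfl fun i _ => key i, Finset.prod_const, Finset.card_univ,
    Fintype.card_fin]

lemma parity_neg {k : ℕ} {i0 i1 : Fin k} {n : PairIdx k → ℕ} (h : ¬ Pred i0 i1 n) :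
    (∏ i : Fin k, ((-1 : ℝ) ^ (deg n i + (if i = i0 ∨ i = i1 then 1 else 0)) + 1)) = 0 := by
  have hex : ∃ i : Fin k, Odd (deg n i + (if i = i0 ∨ i = i1 then 1 else 0)) := by
    by_contra hc
    push_neg at hc
    simp only [Nat.not_odd_iff_even] at hc
    refine h ⟨?_, ?_, ?_⟩
    · have h' := hc i0
      rw [if_pos (Or.inl rfl)] at h'
      rw [← Nat.not_even_iff_odd]
      exact Nat.even_add_one.mp h'
    · have h' := hc i1
      rw [if_pos (Or.inr rfl)] at h'
      rw [← Nat.not_even_iff_odd]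
      exact Nat.even_add_one.mp h'
    · intro i hi0 hi1
      have h' := hc i
      rw [if_neg (by push_neg; exact ⟨hi0, hi1⟩)] at h'
      simpa using h'
  obtain ⟨i, hi⟩ := hex
  refine Finset.prod_eq_zero (Finset.mem_univ i) ?_
  rw [hi.neg_one_pow]; ring

lemma main_eq {k : ℕ} (i0 i1 : Fin k) (h01 : i0 ≠ i1) (x : PairIdx k → ℝ) :
    ∑ a ∈ Fintype.piFinset (fun _ : Fin k => ({-1, 1} : Finset ℝ)),
        a i0 * a i1 * Real.exp (∑ p : PairIdx k, a p.val.1 * a p.val.2 * x p)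
      = 2 ^ k * ∑' n : {n : PairIdx k → ℕ // Pred i0 i1 n},
          ∏ p : PairIdx k, x p ^ (n.val p) / (Nat.factorial (n.val p) : ℝ) := by
  classical
  set c : (PairIdx k → ℕ) → ℝ :=
    fun n => ∏ p : PairIdx k, x p ^ n p / (Nat.factorial (n p) : ℝ) with hcdef
  have expand : ∀ a : Fin k → ℝ,
      a i0 * a i1 * Real.exp (∑ p : PairIdx k, a p.val.1 * a p.val.2 * x p)
        = ∑' n : PairIdx k → ℕ, a i0 * a i1 *
            ∏ p : PairIdx k, (a p.val.1 * a p.val.2 * x p) ^ n p / (Nat.factorial (n p) : ℝ) := by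
    intro a
    have hn : ∀ p : PairIdx k, Summable fun m : ℕ =>
        ‖(a p.val.1 * a p.val.2 * x p) ^ m / (Nat.factorial m : ℝ)‖ := fun p => expser_norm _
    obtain ⟨_, hS⟩ := pi_hasSum
      (fun p m => (a p.val.1 * a p.val.2 * x p) ^ m / (Nat.factorial m : ℝ)) hn
    rw [Real.exp_sum, Finset.prod_congr rfl fun p _ => exp_tsum (a p.val.1 * a p.val.2 * x p),
      ← hS.tsum_eq, ← tsum_mul_left]
  have hsummand : ∀ a : Fin k → ℝ, Summable (fun n : PairIdx k → ℕ => a i0 * a i1 *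
      ∏ p : PairIdx k, (a p.val.1 * a p.val.2 * x p) ^ n p / (Nat.factorial (n p) : ℝ)) :=
    fun a => ((pi_hasSum (fun p m => (a p.val.1 * a p.val.2 * x p) ^ m / (Nat.factorial m : ℝ))
      (fun p => expser_norm _)).1.of_norm).mul_left _
  rw [Finset.sum_congr rfl fun a _ => expand a, ← Summable.tsum_finsetSum (fun a _ => hsummand a)]
  have hfac : ∀ (a : Fin k → ℝ) (n : PairIdx k → ℕ),
      (∏ p : PairIdx k, (a p.val.1 * a p.val.2 * x p) ^ n p / (Nat.factorial (n p) : ℝ))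
        = (∏ p : PairIdx k, (a p.val.1 * a p.val.2) ^ n p) * c n := by
    intro a n
    rw [hcdef, ← Finset.prod_mul_distrib]
    refine Finset.prod_congr rfl fun p _ => ?_
    rw [mul_pow, mul_div_assoc]
  have inner : ∀ n : PairIdx k → ℕ,
      (∑ a ∈ Fintype.piFinset (fun _ : Fin k => ({-1, 1} : Finset ℝ)),
        a i0 * a i1 *
          ∏ p : PairIdx k, (a p.val.1 * a p.val.2 * x p) ^ n p / (Nat.factorial (n p) : ℝ))
        = (if Pred i0 i1 n then (2 : ℝ) ^ k else 0) * c n := by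
    intro n
    have step1 : (∑ a ∈ Fintype.piFinset (fun _ : Fin k => ({-1, 1} : Finset ℝ)),
        a i0 * a i1 *
          ∏ p : PairIdx k, (a p.val.1 * a p.val.2 * x p) ^ n p / (Nat.factorial (n p) : ℝ))
        = (∑ a ∈ Fintype.piFinset (fun _ : Fin k => ({-1, 1} : Finset ℝ)),
            (a i0 * a i1 * ∏ p : PairIdx k, (a p.val.1 * a p.val.2) ^ n p)) * c n := by
      rw [Finset.sum_mul]
      refine Finset.sum_congr rfl fun a _ => ?_
      rw [hfac a n]; ring
    rw [step1, signSum i0 i1 h01 n]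
    by_cases h : Pred i0 i1 n
    · rw [parity_pos h, if_pos h]
    · rw [parity_neg h, if_neg h]
  rw [tsum_congr inner]
  have hind : ∀ n : PairIdx k → ℕ, (if Pred i0 i1 n then (2 : ℝ) ^ k else 0) * c n
      = (2 : ℝ) ^ k * Set.indicator {n | Pred i0 i1 n} c n := by
    intro n
    by_cases h : Pred i0 i1 n
    · rw [if_pos h, Set.indicator_of_mem (show n ∈ {n | Pred i0 i1 n} from h) c]
    · rw [if_neg h, Set.indicator_of_notMem (show n ∉ {n | Pred i0 i1 n} from h) c, zero_mul,
        mul_zero]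
  rw [tsum_congr hind, tsum_mul_left, ← _root_.tsum_subtype {n | Pred i0 i1 n} c]
  rfl

/-- Signed generating-function identity: inserting the factor `a_0 a_1` flips the parity
constraint at the vertices `0` and `1`:
`∑_{a ∈ {-1,1}^k} a_0 a_1 exp(∑_{i<j} a_i a_j x_{ij})
  = 2^k ∑_{n : d_0, d_1 odd, other degrees even} ∏_{i<j} x_{ij}^{n_{ij}}/n_{ij}!`,
the family on the right being summable. -/
theorem stmt_11 (k : ℕ) (hk : 2 ≤ k) (x : PairIdx k → ℝ) :
    Summable (fun n : {n : PairIdx k → ℕ //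
        Odd (deg n ⟨0, by omega⟩) ∧ Odd (deg n ⟨1, by omega⟩) ∧
        ∀ i : Fin k, i ≠ ⟨0, by omega⟩ → i ≠ ⟨1, by omega⟩ → Even (deg n i)} =>
      ∏ p : PairIdx k, x p ^ (n.val p) / (Nat.factorial (n.val p) : ℝ)) ∧
    ∑ a ∈ Fintype.piFinset (fun _ : Fin k => ({-1, 1} : Finset ℝ)),
        a ⟨0, by omega⟩ * a ⟨1, by omega⟩ *
          Real.exp (∑ p : PairIdx k, a p.val.1 * a p.val.2 * x p)
      = 2 ^ k * ∑' n : {n : PairIdx k → ℕ //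
            Odd (deg n ⟨0, by omega⟩) ∧ Odd (deg n ⟨1, by omega⟩) ∧
            ∀ i : Fin k, i ≠ ⟨0, by omega⟩ → i ≠ ⟨1, by omega⟩ → Even (deg n i)},
          ∏ p : PairIdx k, x p ^ (n.val p) / (Nat.factorial (n.val p) : ℝ) := by
  have h01 : (⟨0, by omega⟩ : Fin k) ≠ ⟨1, by omega⟩ := by
    simp [Fin.ext_iff]
  constructor
  · have hc : Summable (fun n : PairIdx k → ℕ =>
        ∏ p : PairIdx k, x p ^ n p / (Nat.factorial (n p) : ℝ)) :=
      (pi_hasSum (fun p m => x p ^ m / (Nat.factorial m : ℝ))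
        (fun p => expser_norm (x p))).1.of_norm
    exact hc.subtype {n : PairIdx k → ℕ | Pred ⟨0, by omega⟩ ⟨1, by omega⟩ n}
  · exact main_eq ⟨0, by omega⟩ ⟨1, by omega⟩ h01 x
end
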